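/- arXiv:2308.07187 — 8 statements merged into one kernel-verified Lean document; each statement's English description precedes it below -/
import Mathlib

section
/- Let A, B be nonnegative matrices with B ≠ 0. Then there exists a natural number r such that A ≤k I_r ⊗ B. -/
open Matrix Kronecker

/-- A real matrix is (entrywise) nonnegative. -/
def EntrywiseNonneg {m n : Type*} (A : Matrix m n ℝ) : Prop := ∀ i j, 0 ≤ A i j

/-- `A ≤k B`: there are nonnegative matrices `X`, `Y` with `A = X * B * Yᵀ`. -/
def KLE {mA nA mB nB : Type*} [Fintype mB] [Fintype nB]
    (A : Matrix mA nA ℝ) (B : Matrix mB nB ℝ) : Prop :=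
  ∃ (X : Matrix mA mB ℝ) (Y : Matrix nA nB ℝ),
    EntrywiseNonneg X ∧ EntrywiseNonneg Y ∧ A = X * B * Yᵀ

/-- If `B ≠ 0`, then `A ≤k I_r ⊗ B` for some natural number `r`. -/
theorem kle_identity_kronecker {mA nA mB nB : ℕ}
    (A : Matrix (Fin mA) (Fin nA) ℝ) (B : Matrix (Fin mB) (Fin nB) ℝ)
    (hA : EntrywiseNonneg A) (hB : EntrywiseNonneg B) (hB0 : B ≠ 0) :
    ∃ r : ℕ, KLE A ((1 : Matrix (Fin r) (Fin r) ℝ) ⊗ₖ B) := by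
  -- find a positive entry of B
  obtain ⟨i0, j0, hc⟩ : ∃ i j, B i j ≠ 0 := by
    by_contra h
    push_neg at h
    exact hB0 (by ext i j; simp [h i j])
  have hcpos : 0 < B i0 j0 := lt_of_le_of_ne (hB i0 j0) (Ne.symm hc)
  refine ⟨nA, ?_⟩
  refine ⟨Matrix.of fun a kp => if kp.2 = i0 then A a kp.1 / B i0 j0 else 0,
          Matrix.of fun b lq => if lq.1 = b ∧ lq.2 = j0 then 1 else 0, ?_, ?_, ?_⟩
  · intro a kp
    dsimp only [Matrix.of_apply]
    split
    · exact div_nonneg (hA a kp.1) (le_of_lt hcpos)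
    · exact le_refl 0
  · intro b lq
    dsimp only [Matrix.of_apply]
    split
    · exact zero_le_one
    · exact le_refl 0
  · ext a b
    simp only [Matrix.mul_apply, Matrix.transpose_apply, kroneckerMap_apply,
      Matrix.one_apply, Fintype.sum_prod_type, Matrix.of_apply]
    rw [Finset.sum_eq_single b]
    · rw [Finset.sum_eq_single j0]
      · rw [Finset.sum_eq_single b]
        · rw [Finset.sum_eq_single i0]
          · simp only [if_true, and_self, mul_one]
            field_simp
          · intro p _ hp
            simp [hp]
          · simp
        · intro k _ hk
          rw [Finset.sum_eq_zero]
          intro p _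
          simp [hk]
        · simp
      · intro q _ hq
        simp [hq]
      · simp
    · intro l _ hl
      rw [Finset.sum_eq_zero]
      intro q _
      simp [hl]
    · simp
end

section
/- For every nonnegative matrix A, the nonnegative subrank equals the maximum induced matching number: Q(A) = γ(A). -/
open Matrix Kronecker

/-- The nonnegative subrank: the largest `q` such that `I_q ≤k A`. -/
noncomputable def subrank {m n : Type*} [Fintype m] [Fintype n] (A : Matrix m n ℝ) : ℕ :=
  sSup {q : ℕ | KLE (1 : Matrix (Fin q) (Fin q) ℝ) A}

/-- `Φ` is an induced matching of `A`: a set of positions in the support of `A` such that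
any two distinct pairs `(a,b), (c,d)` in it satisfy `A a d = 0` and `A c b = 0`. -/
def IsInducedMatching {m n : Type*} (A : Matrix m n ℝ) (Φ : Finset (m × n)) : Prop :=
  (∀ p ∈ Φ, 0 < A p.1 p.2) ∧
  (∀ p ∈ Φ, ∀ q ∈ Φ, p ≠ q → A p.1 q.2 = 0 ∧ A q.1 p.2 = 0)

/-- The maximum size of an induced matching of `A`. -/
noncomputable def inducedMatchingNumber {m n : Type*} [Fintype m] [Fintype n]
    (A : Matrix m n ℝ) : ℕ :=
  sSup {k : ℕ | ∃ Φ : Finset (m × n), IsInducedMatching A Φ ∧ Φ.card = k}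

lemma triple_sum {m n q : ℕ} (X : Matrix (Fin q) (Fin m) ℝ) (A : Matrix (Fin m) (Fin n) ℝ)
    (Y : Matrix (Fin q) (Fin n) ℝ) (i j : Fin q) :
    (X * A * Yᵀ) i j = ∑ a, ∑ b, X i a * A a b * Y j b := by
  simp [Matrix.mul_apply, Matrix.transpose_apply, Finset.sum_mul]
  exact Finset.sum_comm

lemma kle_to_matching {m n q : ℕ} (A : Matrix (Fin m) (Fin n) ℝ) (hA : EntrywiseNonneg A)
    (h : KLE (1 : Matrix (Fin q) (Fin q) ℝ) A) :
    ∃ Φ : Finset (Fin m × Fin n), IsInducedMatching A Φ ∧ Φ.card = q := by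
  obtain ⟨X, Y, hX, hY, hEq⟩ := h
  have key : ∀ i j : Fin q, (1 : Matrix (Fin q) (Fin q) ℝ) i j = ∑ a, ∑ b, X i a * A a b * Y j b := by
    intro i j; rw [hEq]; exact triple_sum X A Y i j
  have hpos : ∀ i : Fin q, ∃ a b, 0 < X i a * A a b * Y i b := by
    intro i
    by_contra hcon
    push_neg at hcon
    have : (∑ a, ∑ b, X i a * A a b * Y i b) ≤ 0 :=
      Finset.sum_nonpos fun a _ => Finset.sum_nonpos fun b _ => hcon a b
    rw [← key i i] at this
    simp [Matrix.one_apply] at this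
    linarith
  choose a b hab using hpos
  have hfac : ∀ i, 0 < X i (a i) ∧ 0 < A (a i) (b i) ∧ 0 < Y i (b i) := by
    intro i
    have h := hab i
    have h1 : 0 < X i (a i) := by
      rcases (hX i (a i)).lt_or_eq with h'|h'
      · exact h'
      · rw [← h'] at h; simp at h
    have h3 : 0 < Y i (b i) := by
      rcases (hY i (b i)).lt_or_eq with h'|h'
      · exact h'
      · rw [← h'] at h; simp at h
    have h2 : 0 < A (a i) (b i) := by
      rcases (hA (a i) (b i)).lt_or_eq with h'|h'
      · exact h'
      · rw [← h'] at h; simp at h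
    exact ⟨h1, h2, h3⟩
  have hoff : ∀ i j : Fin q, i ≠ j → A (a i) (b j) = 0 := by
    intro i j hij
    have hz : (∑ a', ∑ b', X i a' * A a' b' * Y j b') = 0 := by
      rw [← key i j]; simp [Matrix.one_apply, hij]
    have hterm : X i (a i) * A (a i) (b j) * Y j (b j) = 0 := by
      have h1 := (Finset.sum_eq_zero_iff_of_nonneg (fun a' _ =>
        Finset.sum_nonneg fun b' _ =>
          mul_nonneg (mul_nonneg (hX i a') (hA a' b')) (hY j b'))).mp hz (a i) (Finset.mem_univ _)
      have h2 := (Finset.sum_eq_zero_iff_of_nonneg (fun b' _ =>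
          mul_nonneg (mul_nonneg (hX i (a i)) (hA (a i) b')) (hY j b'))).mp h1 (b j)
        (Finset.mem_univ _)
      exact h2
    rcases mul_eq_zero.mp hterm with h'|h'
    · rcases mul_eq_zero.mp h' with h''|h''
      · exact absurd h'' (ne_of_gt (hfac i).1)
      · exact h''
    · exact absurd h' (ne_of_gt (hfac j).2.2)
  have hinj : Function.Injective (fun i => (a i, b i)) := by
    intro i j hij
    simp only [Prod.mk.injEq] at hij
    by_contra hne
    have h0 := hoff i j hne
    rw [← hij.2] at h0
    exact absurd h0 (ne_of_gt (hfac i).2.1)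
  refine ⟨Finset.image (fun i => (a i, b i)) Finset.univ, ⟨?_, ?_⟩, ?_⟩
  · intro p hp
    simp only [Finset.mem_image, Finset.mem_univ, true_and] at hp
    obtain ⟨i, hi⟩ := hp
    rw [← hi]
    exact (hfac i).2.1
  · intro p hp r hr hpr
    simp only [Finset.mem_image, Finset.mem_univ, true_and] at hp hr
    obtain ⟨i, hi⟩ := hp
    obtain ⟨j, hj⟩ := hr
    have hij : i ≠ j := by rintro rfl; exact hpr (hi.symm.trans hj)
    rw [← hi, ← hj]
    exact ⟨hoff i j hij, hoff j i (Ne.symm hij)⟩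
  · rw [Finset.card_image_of_injective _ hinj, Finset.card_univ, Fintype.card_fin]

lemma matching_to_kle {m n q : ℕ} (A : Matrix (Fin m) (Fin n) ℝ) (hA : EntrywiseNonneg A)
    (Φ : Finset (Fin m × Fin n)) (hΦ : IsInducedMatching A Φ) (hcard : Φ.card = q) :
    KLE (1 : Matrix (Fin q) (Fin q) ℝ) A := by
  obtain ⟨hpos, hoff⟩ := hΦ
  have e : Fin q ≃ {x // x ∈ Φ} := (Fin.castOrderIso hcard.symm).toEquiv.trans Φ.equivFin.symm
  set f : Fin q → Fin m × Fin n := fun i => (e i : Fin m × Fin n) with hf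
  have hfΦ : ∀ i, f i ∈ Φ := fun i => (e i).2
  have hfinj : Function.Injective f := fun i j h =>
    e.injective (Subtype.ext h)
  refine ⟨fun i a' => if a' = (f i).1 then 1 / A (f i).1 (f i).2 else 0,
          fun j b' => if b' = (f j).2 then 1 else 0, ?_, ?_, ?_⟩
  · intro i a'
    dsimp only
    split
    · have := hpos (f i) (hfΦ i); positivity
    · exact le_refl 0
  · intro j b'
    dsimp only
    split <;> norm_num
  · refine Matrix.ext fun i j => ?_
    show (1 : Matrix (Fin q) (Fin q) ℝ) i j = _
    refine Eq.trans ?_ (triple_sum (m := m) (n := n) (q := q)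
      (fun i a' => if a' = (f i).1 then 1 / A (f i).1 (f i).2 else 0) A
      (fun j b' => if b' = (f j).2 then 1 else 0) i j).symm
    simp only [mul_ite, ite_mul, zero_mul, mul_zero, mul_one, one_mul]
    rw [Finset.sum_eq_single (f i).1]
    · rw [Finset.sum_eq_single (f j).2]
      · simp only [if_pos rfl]
        by_cases hij : i = j
        · subst hij
          have := hpos (f i) (hfΦ i)
          rw [Matrix.one_apply_eq]
          field_simp
          simp
        · have hne : f i ≠ f j := fun h => hij (hfinj h)
          have := (hoff (f i) (hfΦ i) (f j) (hfΦ j) hne).1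
          rw [this, Matrix.one_apply_ne hij]
          simp
      · intro b' _ hb'; simp [hb']
      · intro h; exact absurd (Finset.mem_univ _) h
    · intro a' _ ha'
      apply Finset.sum_eq_zero
      intro b' _
      simp [ha']
    · intro h; exact absurd (Finset.mem_univ _) h

/-- The nonnegative subrank equals the maximum induced matching number. -/
theorem subrank_eq_inducedMatchingNumber {m n : ℕ} (A : Matrix (Fin m) (Fin n) ℝ)
    (hA : EntrywiseNonneg A) :
    subrank A = inducedMatchingNumber A := by
  unfold subrank inducedMatchingNumber
  congr 1
  ext q
  constructor
  · intro h; exact kle_to_matching A hA h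
  · rintro ⟨Φ, hΦ, hc⟩; exact matching_to_kle A hA Φ hΦ hc
end

section
/- For every nonnegative matrix A, γ(A) ≤ Q(A), i.e., the maximum induced matching number is a lower bound on the nonnegative subrank. -/
open Matrix Kronecker

lemma kle_of_matching {m n : ℕ} (A : Matrix (Fin m) (Fin n) ℝ)
    (Φ : Finset (Fin m × Fin n)) (h : IsInducedMatching A Φ) :
    KLE (1 : Matrix (Fin Φ.card) (Fin Φ.card) ℝ) A := by
  set e := Φ.equivFin
  set a : Fin Φ.card → Fin m := fun i => ((e.symm i : Fin m × Fin n)).1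
  set b : Fin Φ.card → Fin n := fun i => ((e.symm i : Fin m × Fin n)).2
  have hmem : ∀ i, (a i, b i) ∈ Φ := fun i => (e.symm i).2
  refine ⟨Matrix.of fun i r => if r = a i then 1 else 0,
    Matrix.of fun j s => if s = b j then (A (a j) (b j))⁻¹ else 0, ?_, ?_, ?_⟩
  · intro i r; dsimp only [Matrix.of_apply]; split <;> norm_num
  · intro j s; dsimp only [Matrix.of_apply]; split
    · exact le_of_lt (inv_pos.2 (h.1 _ (hmem j)))
    · exact le_rfl
  · ext i j
    simp only [Matrix.mul_apply, Matrix.transpose_apply, Matrix.of_apply, ite_mul, one_mul,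
      zero_mul, mul_ite, mul_zero, Finset.sum_ite_eq, Finset.sum_ite_eq',
      Finset.mem_univ, if_true]
    by_cases hij : i = j
    · subst hij
      simp [Matrix.one_apply, mul_inv_cancel₀ (ne_of_gt (h.1 _ (hmem i)))]
    · have hne : e.symm i ≠ e.symm j := fun hc => hij (e.symm.injective hc)
      have := (h.2 _ (hmem i) _ (hmem j) (by exact fun hc => hne (Subtype.ext (Prod.ext (congrArg Prod.fst hc) (congrArg Prod.snd hc))))).1
      simp [Matrix.one_apply, hij, this]

/-- The maximum induced matching number is a lower bound on the nonnegative subrank. -/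
theorem inducedMatchingNumber_le_subrank {m n : ℕ} (A : Matrix (Fin m) (Fin n) ℝ)
    (hA : EntrywiseNonneg A) :
    inducedMatchingNumber A ≤ subrank A := by
  have hbdd2 : BddAbove {q : ℕ | KLE (1 : Matrix (Fin q) (Fin q) ℝ) A} := by
    refine ⟨n, fun q hq => ?_⟩
    obtain ⟨X, Y, _, _, hXY⟩ := hq
    have h1 : (1 : Matrix (Fin q) (Fin q) ℝ).rank = q := by
      rw [Matrix.rank_one, Fintype.card_fin]
    have : (X * A * Yᵀ).rank ≤ A.rank :=
      le_trans (Matrix.rank_mul_le_left _ _) (Matrix.rank_mul_le_right _ _)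
    rw [← hXY, h1] at this
    exact le_trans this (le_trans A.rank_le_card_width (le_of_eq (Fintype.card_fin n)))
  have hbdd1 : BddAbove {k : ℕ | ∃ Φ : Finset (Fin m × Fin n), IsInducedMatching A Φ ∧ Φ.card = k} := by
    refine ⟨m * n, fun k hk => ?_⟩
    obtain ⟨Φ, _, rfl⟩ := hk
    calc Φ.card ≤ Fintype.card (Fin m × Fin n) := Φ.card_le_univ
    _ = m * n := by simp
  have hne1 : {k : ℕ | ∃ Φ : Finset (Fin m × Fin n), IsInducedMatching A Φ ∧ Φ.card = k}.Nonempty :=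
    ⟨0, ∅, ⟨fun p hp => absurd hp (Finset.notMem_empty p),
           fun p hp => absurd hp (Finset.notMem_empty p)⟩, rfl⟩
  rw [inducedMatchingNumber, subrank]
  obtain ⟨Φ, hΦ, hcard⟩ := Nat.sSup_mem hne1 hbdd1
  rw [← hcard]
  exact le_csSup hbdd2 (by rw [← hcard] at hcard ⊢; exact kle_of_matching A Φ hΦ)
end

section
/- Let A, B, C be nonnegative matrices with A = BC (the usual matrix product). Then γ(A) ≤ min(γ(B), γ(C)). -/
open Matrix Kronecker

/-- If `A = B * C` with nonnegative matrices, then `γ(A) ≤ min (γ(B), γ(C))`. -/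
theorem inducedMatchingNumber_mul_le {m k n : ℕ}
    (A : Matrix (Fin m) (Fin n) ℝ) (B : Matrix (Fin m) (Fin k) ℝ)
    (C : Matrix (Fin k) (Fin n) ℝ)
    (hA : EntrywiseNonneg A) (hB : EntrywiseNonneg B) (hC : EntrywiseNonneg C)
    (hABC : A = B * C) :
    inducedMatchingNumber A ≤ min (inducedMatchingNumber B) (inducedMatchingNumber C) := by
  classical
  -- basic consequences of A = B * C with nonnegativity
  have hz : ∀ i j, A i j = 0 → ∀ t, B i t * C t j = 0 := by
    intro i j h t
    have hs : ∑ s, B i s * C s j = 0 := by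
      rw [hABC, Matrix.mul_apply] at h; exact h
    exact (Finset.sum_eq_zero_iff_of_nonneg
      (fun s _ => mul_nonneg (hB i s) (hC s j))).mp hs t (Finset.mem_univ t)
  have hpos : ∀ i j, 0 < A i j → ∃ t, 0 < B i t ∧ 0 < C t j := by
    intro i j h
    by_contra hc
    push_neg at hc
    have h0 : A i j = 0 := by
      rw [hABC, Matrix.mul_apply]
      apply Finset.sum_eq_zero
      intro s _
      rcases (hB i s).eq_or_lt with hb | hb
      · rw [← hb, zero_mul]
      · have := le_antisymm (hc s hb) (hC s j)
        rw [this, mul_zero]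
    rw [h0] at h; exact lt_irrefl 0 h
  have hbddB : BddAbove {s : ℕ | ∃ Φ : Finset (Fin m × Fin k),
      IsInducedMatching B Φ ∧ Φ.card = s} := by
    refine ⟨Fintype.card (Fin m × Fin k), ?_⟩
    rintro s ⟨Φ, _, rfl⟩
    simpa using Finset.card_le_univ Φ
  have hbddC : BddAbove {s : ℕ | ∃ Φ : Finset (Fin k × Fin n),
      IsInducedMatching C Φ ∧ Φ.card = s} := by
    refine ⟨Fintype.card (Fin k × Fin n), ?_⟩
    rintro s ⟨Φ, _, rfl⟩
    simpa using Finset.card_le_univ Φ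
  have hemp : ∀ {α β : Type} (M : Matrix α β ℝ), IsInducedMatching M (∅ : Finset (α × β)) := by
    intro α β M
    constructor
    · intro p hp; exact absurd hp (Finset.notMem_empty p)
    · intro p hp; exact absurd hp (Finset.notMem_empty p)
  refine le_min ?_ ?_
  · refine csSup_le ⟨0, ∅, hemp A, rfl⟩ ?_
    rintro s ⟨Φ, hΦ, rfl⟩
    have hch : ∀ p : {x // x ∈ Φ}, ∃ t, 0 < B p.1.1 t ∧ 0 < C t p.1.2 :=
      fun p => hpos _ _ (hΦ.1 p.1 p.2)
    choose t ht1 ht2 using hch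
    have hB0 : ∀ p q : {x // x ∈ Φ}, p.1 ≠ q.1 → B p.1.1 (t q) = 0 := by
      intro p q hne
      have := hz _ _ ((hΦ.2 p.1 p.2 q.1 q.2 hne).1) (t q)
      rcases mul_eq_zero.mp this with h | h
      · exact h
      · exact absurd h (ht2 q).ne'
    set f : {x // x ∈ Φ} → Fin m × Fin k := fun p => (p.1.1, t p) with hf
    have hfinj : Function.Injective f := by
      intro p q hpq
      by_contra hne
      have hne' : p.1 ≠ q.1 := fun h => hne (Subtype.ext h)
      simp only [hf, Prod.mk.injEq] at hpq
      obtain ⟨h1, h2⟩ := hpq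
      have := hB0 p q hne'
      rw [← h2] at this
      exact absurd this (ht1 p).ne'
    refine le_csSup hbddB ⟨Finset.univ.image f, ⟨?_, ?_⟩, ?_⟩
    · rintro u hu
      obtain ⟨p, -, rfl⟩ := Finset.mem_image.mp hu
      exact ht1 p
    · rintro u hu v hv huv
      obtain ⟨p, -, rfl⟩ := Finset.mem_image.mp hu
      obtain ⟨q, -, rfl⟩ := Finset.mem_image.mp hv
      have hne : p ≠ q := fun h => huv (by rw [h])
      have hne' : p.1 ≠ q.1 := fun h => hne (Subtype.ext h)
      exact ⟨hB0 p q hne', hB0 q p hne'.symm⟩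
    · rw [Finset.card_image_of_injective _ hfinj, Finset.card_univ, Fintype.card_coe]
  · refine csSup_le ⟨0, ∅, hemp A, rfl⟩ ?_
    rintro s ⟨Φ, hΦ, rfl⟩
    have hch : ∀ p : {x // x ∈ Φ}, ∃ t, 0 < B p.1.1 t ∧ 0 < C t p.1.2 :=
      fun p => hpos _ _ (hΦ.1 p.1 p.2)
    choose t ht1 ht2 using hch
    have hC0 : ∀ p q : {x // x ∈ Φ}, p.1 ≠ q.1 → C (t p) q.1.2 = 0 := by
      intro p q hne
      have := hz _ _ ((hΦ.2 p.1 p.2 q.1 q.2 hne).1) (t p)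
      rcases mul_eq_zero.mp this with h | h
      · exact absurd h (ht1 p).ne'
      · exact h
    set g : {x // x ∈ Φ} → Fin k × Fin n := fun p => (t p, p.1.2) with hg
    have hginj : Function.Injective g := by
      intro p q hpq
      by_contra hne
      have hne' : p.1 ≠ q.1 := fun h => hne (Subtype.ext h)
      simp only [hg, Prod.mk.injEq] at hpq
      obtain ⟨h1, h2⟩ := hpq
      have := hC0 q p hne'.symm
      rw [← h1] at this
      exact absurd this (ht2 p).ne'
    refine le_csSup hbddC ⟨Finset.univ.image g, ⟨?_, ?_⟩, ?_⟩
    · rintro u hu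
      obtain ⟨p, -, rfl⟩ := Finset.mem_image.mp hu
      exact ht2 p
    · rintro u hu v hv huv
      obtain ⟨p, -, rfl⟩ := Finset.mem_image.mp hu
      obtain ⟨q, -, rfl⟩ := Finset.mem_image.mp hv
      have hne : p ≠ q := fun h => huv (by rw [h])
      have hne' : p.1 ≠ q.1 := fun h => hne (Subtype.ext h)
      exact ⟨hC0 p q hne', hC0 q p hne'.symm⟩
    · rw [Finset.card_image_of_injective _ hginj, Finset.card_univ, Fintype.card_coe]
end

section
/- For every pair of nonnegative matrices X and Y, the nonnegative rank is additive under direct sum: nrank(X ⊕ Y) = nrank(X) + nrank(Y). -/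
open Matrix Kronecker

/-- The nonnegative rank of a matrix. -/
noncomputable def nrank {m n : Type*} (A : Matrix m n ℝ) : ℕ :=
  sInf {r : ℕ | ∃ (B : Matrix m (Fin r) ℝ) (C : Matrix (Fin r) n ℝ),
    EntrywiseNonneg B ∧ EntrywiseNonneg C ∧ A = B * C}

lemma nrank_le_of_fact {m n : Type*} (A : Matrix m n ℝ) {r : ℕ}
    (B : Matrix m (Fin r) ℝ) (C : Matrix (Fin r) n ℝ)
    (hB : EntrywiseNonneg B) (hC : EntrywiseNonneg C) (h : A = B * C) :
    nrank A ≤ r :=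
  Nat.sInf_le ⟨B, C, hB, hC, h⟩

lemma nrank_set_nonempty {m n : Type*} [Fintype n] [DecidableEq n]
    (A : Matrix m n ℝ) (hA : EntrywiseNonneg A) :
    {r : ℕ | ∃ (B : Matrix m (Fin r) ℝ) (C : Matrix (Fin r) n ℝ),
      EntrywiseNonneg B ∧ EntrywiseNonneg C ∧ A = B * C}.Nonempty := by
  classical
  refine ⟨Fintype.card n, A.submatrix id (Fintype.equivFin n).symm,
    (1 : Matrix n n ℝ).submatrix (Fintype.equivFin n).symm id, ?_, ?_, ?_⟩
  · intro i k; exact hA i _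
  · intro k j
    simp only [Matrix.submatrix_apply, Matrix.one_apply, id]
    split <;> norm_num
  · rw [Matrix.submatrix_mul_equiv, Matrix.mul_one]
    rfl

lemma exists_opt_fact {m n : Type*} [Fintype n] [DecidableEq n]
    (A : Matrix m n ℝ) (hA : EntrywiseNonneg A) :
    ∃ (B : Matrix m (Fin (nrank A)) ℝ) (C : Matrix (Fin (nrank A)) n ℝ),
      EntrywiseNonneg B ∧ EntrywiseNonneg C ∧ A = B * C :=
  Nat.sInf_mem (nrank_set_nonempty A hA)

/-- Lower bound: any nonnegative factorization of a direct sum splits. -/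
lemma nrank_add_le_of_fact {mX nX mY nY : ℕ}
    (X : Matrix (Fin mX) (Fin nX) ℝ) (Y : Matrix (Fin mY) (Fin nY) ℝ)
    {r : ℕ} (B : Matrix (Fin mX ⊕ Fin mY) (Fin r) ℝ)
    (C : Matrix (Fin r) (Fin nX ⊕ Fin nY) ℝ)
    (hB : EntrywiseNonneg B) (hC : EntrywiseNonneg C)
    (hBC : Matrix.fromBlocks X 0 0 Y = B * C) :
    nrank X + nrank Y ≤ r := by
  classical
  have hz12 : ∀ (i : Fin mX) (j : Fin nY) (k : Fin r),
      B (Sum.inl i) k * C k (Sum.inr j) = 0 := by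
    intro i j
    have h0 : ∑ k, B (Sum.inl i) k * C k (Sum.inr j) = 0 := by
      have := congrFun (congrFun hBC (Sum.inl i)) (Sum.inr j)
      simpa [Matrix.mul_apply] using this.symm
    intro k
    exact (Finset.sum_eq_zero_iff_of_nonneg
      (fun k _ => mul_nonneg (hB _ _) (hC _ _))).mp h0 k (Finset.mem_univ k)
  set S : Finset (Fin r) := Finset.univ.filter
    (fun k => (∃ i, B (Sum.inl i) k ≠ 0) ∧ ∃ j, C k (Sum.inl j) ≠ 0) with hS
  set T : Finset (Fin r) := Finset.univ.filter
    (fun k => (∃ i, B (Sum.inr i) k ≠ 0) ∧ ∃ j, C k (Sum.inr j) ≠ 0) with hT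
  have hdisj : Disjoint S T := by
    rw [Finset.disjoint_left]
    intro k hkS hkT
    simp only [hS, hT, Finset.mem_filter, Finset.mem_univ, true_and] at hkS hkT
    obtain ⟨⟨i, hi⟩, -⟩ := hkS
    obtain ⟨-, ⟨j, hj⟩⟩ := hkT
    rcases mul_eq_zero.mp (hz12 i j k) with h | h
    · exact hi h
    · exact hj h
  have hXle : nrank X ≤ S.card := by
    have eS : ↥S ≃ Fin S.card := Fintype.equivFinOfCardEq (Fintype.card_coe S)
    refine nrank_le_of_fact X
      (fun i a => B (Sum.inl i) ((eS.symm a : ↥S) : Fin r))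
      (fun a j => C ((eS.symm a : ↥S) : Fin r) (Sum.inl j))
      (by intro i a; exact hB _ _) (by intro a j; exact hC _ _) ?_
    ext i j
    show X i j = ∑ a : Fin S.card,
        B (Sum.inl i) ((eS.symm a : ↥S) : Fin r) * C ((eS.symm a : ↥S) : Fin r) (Sum.inl j)
    have h1 : ∑ a : Fin S.card,
        B (Sum.inl i) ((eS.symm a : ↥S) : Fin r) * C ((eS.symm a : ↥S) : Fin r) (Sum.inl j)
        = ∑ k ∈ S, B (Sum.inl i) k * C k (Sum.inl j) := by
      rw [← Finset.sum_coe_sort S (fun k => B (Sum.inl i) k * C k (Sum.inl j))]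
      exact Fintype.sum_equiv eS.symm _ _ (fun a => rfl)
    rw [h1]
    have h2 : X i j = ∑ k, B (Sum.inl i) k * C k (Sum.inl j) := by
      have := congrFun (congrFun hBC (Sum.inl i)) (Sum.inl j)
      simpa [Matrix.mul_apply] using this
    rw [h2]
    refine (Finset.sum_subset (Finset.subset_univ S) ?_).symm
    intro k _ hk
    by_cases hb : B (Sum.inl i) k = 0
    · rw [hb, zero_mul]
    · have hns : ¬ ((∃ i, B (Sum.inl i) k ≠ 0) ∧ ∃ j, C k (Sum.inl j) ≠ 0) := by
        simpa [hS] using hk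
      have hc : C k (Sum.inl j) = 0 := by
        by_contra hc
        exact hns ⟨⟨i, hb⟩, ⟨j, hc⟩⟩
      rw [hc, mul_zero]
  have hYle : nrank Y ≤ T.card := by
    have eT : ↥T ≃ Fin T.card := Fintype.equivFinOfCardEq (Fintype.card_coe T)
    refine nrank_le_of_fact Y
      (fun i a => B (Sum.inr i) ((eT.symm a : ↥T) : Fin r))
      (fun a j => C ((eT.symm a : ↥T) : Fin r) (Sum.inr j))
      (by intro i a; exact hB _ _) (by intro a j; exact hC _ _) ?_
    ext i j
    show Y i j = ∑ a : Fin T.card,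
        B (Sum.inr i) ((eT.symm a : ↥T) : Fin r) * C ((eT.symm a : ↥T) : Fin r) (Sum.inr j)
    have h1 : ∑ a : Fin T.card,
        B (Sum.inr i) ((eT.symm a : ↥T) : Fin r) * C ((eT.symm a : ↥T) : Fin r) (Sum.inr j)
        = ∑ k ∈ T, B (Sum.inr i) k * C k (Sum.inr j) := by
      rw [← Finset.sum_coe_sort T (fun k => B (Sum.inr i) k * C k (Sum.inr j))]
      exact Fintype.sum_equiv eT.symm _ _ (fun a => rfl)
    rw [h1]
    have h2 : Y i j = ∑ k, B (Sum.inr i) k * C k (Sum.inr j) := by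
      have := congrFun (congrFun hBC (Sum.inr i)) (Sum.inr j)
      simpa [Matrix.mul_apply] using this
    rw [h2]
    refine (Finset.sum_subset (Finset.subset_univ T) ?_).symm
    intro k _ hk
    by_cases hb : B (Sum.inr i) k = 0
    · rw [hb, zero_mul]
    · have hns : ¬ ((∃ i, B (Sum.inr i) k ≠ 0) ∧ ∃ j, C k (Sum.inr j) ≠ 0) := by
        simpa [hT] using hk
      have hc : C k (Sum.inr j) = 0 := by
        by_contra hc
        exact hns ⟨⟨i, hb⟩, ⟨j, hc⟩⟩
      rw [hc, mul_zero]
  have hcard : S.card + T.card ≤ r := by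
    rw [← Finset.card_union_of_disjoint hdisj]
    calc (S ∪ T).card ≤ (Finset.univ : Finset (Fin r)).card :=
          Finset.card_le_card (Finset.subset_univ _)
      _ = r := by simp
  omega

/-- The nonnegative rank is additive under direct sums. -/
theorem nrank_directSum {mX nX mY nY : ℕ}
    (X : Matrix (Fin mX) (Fin nX) ℝ) (Y : Matrix (Fin mY) (Fin nY) ℝ)
    (hX : EntrywiseNonneg X) (hY : EntrywiseNonneg Y) :
    nrank (Matrix.fromBlocks X 0 0 Y) = nrank X + nrank Y := by
  classical
  apply le_antisymm
  · obtain ⟨BX, CX, hBX, hCX, hX'⟩ := exists_opt_fact X hX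
    obtain ⟨BY, CY, hBY, hCY, hY'⟩ := exists_opt_fact Y hY
    set e := finSumFinEquiv (m := nrank X) (n := nrank Y)
    refine nrank_le_of_fact _
      ((Matrix.fromBlocks BX 0 0 BY).submatrix id e.symm)
      ((Matrix.fromBlocks CX 0 0 CY).submatrix e.symm id) ?_ ?_ ?_
    · rintro (i | i) k <;> rcases h : e.symm k with a | a <;>
        simp [Matrix.fromBlocks, h] <;> first | exact hBX _ _ | exact hBY _ _
    · rintro k (j | j) <;> rcases h : e.symm k with a | a <;>
        simp [Matrix.fromBlocks, h] <;> first | exact hCX _ _ | exact hCY _ _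
    · rw [Matrix.submatrix_mul_equiv, Matrix.fromBlocks_multiply]
      simp [← hX', ← hY']
  · obtain ⟨B, C, hB, hC, hBC⟩ := exists_opt_fact (Matrix.fromBlocks X 0 0 Y)
      (by rintro (i | i) (j | j) <;> simp [Matrix.fromBlocks] <;>
        first | exact hX _ _ | exact hY _ _)
    exact nrank_add_le_of_fact X Y B C hB hC hBC
end

section
/- For every pair of nonnegative matrices X and Y, the nonnegative subrank is additive under direct sum: Q(X ⊕ Y) = Q(X) + Q(Y). -/
open Matrix Kronecker

/-! ### Auxiliary lemmas -/

lemma kle_zero {m n : Type*} [Fintype m] [Fintype n] (A : Matrix m n ℝ) :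
    KLE (1 : Matrix (Fin 0) (Fin 0) ℝ) A :=
  ⟨0, 0, fun i _ => le_rfl, fun i _ => le_rfl, by ext i j; exact i.elim0⟩

lemma kle_le_card {m n : Type*} [Fintype m] [Fintype n] {q : ℕ} {A : Matrix m n ℝ}
    (h : KLE (1 : Matrix (Fin q) (Fin q) ℝ) A) : q ≤ Fintype.card m := by
  obtain ⟨X, Y, -, -, hEq⟩ := h
  calc q = (1 : Matrix (Fin q) (Fin q) ℝ).rank := by simp [Matrix.rank_one]
    _ = (X * A * Yᵀ).rank := by rw [← hEq]
    _ ≤ (X * A).rank := Matrix.rank_mul_le_left _ _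
    _ ≤ A.rank := Matrix.rank_mul_le_right _ _
    _ ≤ Fintype.card m := Matrix.rank_le_card_height _

lemma subrank_bdd {m n : Type*} [Fintype m] [Fintype n] (A : Matrix m n ℝ) :
    BddAbove {q : ℕ | KLE (1 : Matrix (Fin q) (Fin q) ℝ) A} :=
  ⟨Fintype.card m, fun _ hq => kle_le_card hq⟩

lemma subrank_mem {m n : Type*} [Fintype m] [Fintype n] (A : Matrix m n ℝ) :
    KLE (1 : Matrix (Fin (subrank A)) (Fin (subrank A)) ℝ) A :=
  Nat.sSup_mem ⟨0, kle_zero A⟩ (subrank_bdd A)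

lemma le_subrank {m n : Type*} [Fintype m] [Fintype n] {q : ℕ} {A : Matrix m n ℝ}
    (h : KLE (1 : Matrix (Fin q) (Fin q) ℝ) A) : q ≤ subrank A :=
  le_csSup (subrank_bdd A) h

lemma EntrywiseNonneg.matmul {l m n : Type*} [Fintype m] {A : Matrix l m ℝ} {B : Matrix m n ℝ}
    (hA : EntrywiseNonneg A) (hB : EntrywiseNonneg B) : EntrywiseNonneg (A * B) := by
  intro i j
  rw [Matrix.mul_apply]
  exact Finset.sum_nonneg fun k _ => mul_nonneg (hA i k) (hB k j)

lemma EntrywiseNonneg.transpose {m n : Type*} {A : Matrix m n ℝ}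
    (hA : EntrywiseNonneg A) : EntrywiseNonneg Aᵀ := fun i j => hA j i

lemma EntrywiseNonneg.submatrix {m n l o : Type*} {A : Matrix m n ℝ}
    (hA : EntrywiseNonneg A) (f : l → m) (g : o → n) :
    EntrywiseNonneg (A.submatrix f g) := fun i j => hA (f i) (g j)

lemma EntrywiseNonneg.fromBlocks {m₁ m₂ n₁ n₂ : Type*}
    {A : Matrix m₁ n₁ ℝ} {B : Matrix m₁ n₂ ℝ} {C : Matrix m₂ n₁ ℝ} {D : Matrix m₂ n₂ ℝ}
    (hA : EntrywiseNonneg A) (hB : EntrywiseNonneg B) (hC : EntrywiseNonneg C)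
    (hD : EntrywiseNonneg D) : EntrywiseNonneg (Matrix.fromBlocks A B C D) := by
  rintro (i | i) (j | j)
  · exact hA i j
  · exact hB i j
  · exact hC i j
  · exact hD i j

lemma EntrywiseNonneg.zero {m n : Type*} : EntrywiseNonneg (0 : Matrix m n ℝ) :=
  fun _ _ => le_rfl

/-- Easy direction: direct sums of identities embed into direct sums. -/
lemma kle_directSum {p q mX nX mY nY : ℕ}
    {A : Matrix (Fin mX) (Fin nX) ℝ} {B : Matrix (Fin mY) (Fin nY) ℝ}
    (hA : KLE (1 : Matrix (Fin p) (Fin p) ℝ) A)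
    (hB : KLE (1 : Matrix (Fin q) (Fin q) ℝ) B) :
    KLE (1 : Matrix (Fin (p + q)) (Fin (p + q)) ℝ) (Matrix.fromBlocks A 0 0 B) := by
  obtain ⟨X1, Y1, hX1, hY1, h1⟩ := hA
  obtain ⟨X2, Y2, hX2, hY2, h2⟩ := hB
  set e : Fin (p + q) ≃ Fin p ⊕ Fin q := finSumFinEquiv.symm with he
  refine ⟨(Matrix.fromBlocks X1 0 0 X2).submatrix e id,
    (Matrix.fromBlocks Y1 0 0 Y2).submatrix e id,
    (EntrywiseNonneg.fromBlocks hX1 .zero .zero hX2).submatrix e id,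
    (EntrywiseNonneg.fromBlocks hY1 .zero .zero hY2).submatrix e id, ?_⟩
  have key : Matrix.fromBlocks X1 0 0 X2 * Matrix.fromBlocks A 0 0 B *
      (Matrix.fromBlocks Y1 0 0 Y2)ᵀ = 1 := by
    rw [Matrix.fromBlocks_transpose, Matrix.fromBlocks_multiply, Matrix.fromBlocks_multiply,
      ← Matrix.fromBlocks_one]
    congr 1 <;> simp [← h1, ← h2]
  have hsub : (Matrix.fromBlocks X1 0 0 X2 * Matrix.fromBlocks A 0 0 B *
      (Matrix.fromBlocks Y1 0 0 Y2)ᵀ).submatrix e e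
      = (Matrix.fromBlocks X1 0 0 X2).submatrix e id * Matrix.fromBlocks A 0 0 B *
        ((Matrix.fromBlocks Y1 0 0 Y2).submatrix e id)ᵀ := by
    rw [Matrix.submatrix_mul _ _ e id e Function.bijective_id,
      Matrix.submatrix_mul _ _ e id id Function.bijective_id,
      Matrix.submatrix_id_id, Matrix.transpose_submatrix]
  rw [← hsub, key, Matrix.submatrix_one_equiv]

/-- From a nonnegative diagonal factorization, extract an identity of size the number of
nonzero diagonal entries. -/
lemma kle_of_diag {q mA nA : ℕ} {A : Matrix (Fin mA) (Fin nA) ℝ}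
    {D : Matrix (Fin q) (Fin q) ℝ}
    (hdiag : ∀ i j, i ≠ j → D i j = 0)
    {X1 : Matrix (Fin q) (Fin mA) ℝ} {Y1 : Matrix (Fin q) (Fin nA) ℝ}
    (hX1 : EntrywiseNonneg X1) (hY1 : EntrywiseNonneg Y1)
    (hD : D = X1 * A * Y1ᵀ) (hDnn : EntrywiseNonneg D) :
    KLE (1 : Matrix (Fin ((Finset.univ.filter fun i => D i i ≠ 0).card))
      (Fin ((Finset.univ.filter fun i => D i i ≠ 0).card)) ℝ) A := by
  set S : Finset (Fin q) := Finset.univ.filter fun i => D i i ≠ 0 with hS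
  let f : Fin S.card → Fin q := fun i => (S.equivFin.symm i : Fin q)
  have hfinj : Function.Injective f :=
    fun i j hij => S.equivFin.symm.injective (Subtype.val_injective hij)
  have hfne : ∀ i, D (f i) (f i) ≠ 0 := by
    intro i
    exact (Finset.mem_filter.mp (S.equivFin.symm i).2).2
  let d : Fin S.card → ℝ := fun i => (D (f i) (f i))⁻¹
  refine ⟨Matrix.diagonal d * X1.submatrix f id, Y1.submatrix f id, ?_, hY1.submatrix f id, ?_⟩
  · intro i j
    rw [Matrix.diagonal_mul]
    exact mul_nonneg (inv_nonneg.mpr (hDnn _ _)) (hX1 _ _)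
  · have hsub : X1.submatrix f id * A * (Y1.submatrix f id)ᵀ = D.submatrix f f := by
      rw [Matrix.transpose_submatrix, hD,
        Matrix.submatrix_mul (X1 * A) Y1ᵀ f id f Function.bijective_id,
        Matrix.submatrix_mul X1 A f id id Function.bijective_id, Matrix.submatrix_id_id]
    rw [Matrix.mul_assoc, Matrix.mul_assoc, ← Matrix.mul_assoc (X1.submatrix f id), hsub]
    ext i j
    rw [Matrix.diagonal_mul, Matrix.submatrix_apply]
    by_cases hij : i = j
    · subst hij
      rw [Matrix.one_apply_eq]
      exact (inv_mul_cancel₀ (hfne i)).symm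
    · rw [Matrix.one_apply_ne hij, hdiag _ _ (fun h => hij (hfinj h)), mul_zero]

/-- Splitting a product against a block-diagonal matrix. -/
lemma mul_fromBlocks_split {q mX nX mY nY : ℕ}
    (W : Matrix (Fin q) (Fin mX ⊕ Fin mY) ℝ) (Z : Matrix (Fin q) (Fin nX ⊕ Fin nY) ℝ)
    (A : Matrix (Fin mX) (Fin nX) ℝ) (B : Matrix (Fin mY) (Fin nY) ℝ) :
    W * Matrix.fromBlocks A 0 0 B * Zᵀ =
      W.toCols₁ * A * Z.toCols₁ᵀ + W.toCols₂ * B * Z.toCols₂ᵀ := by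
  nth_rewrite 1 [← Matrix.fromCols_toCols W, ← Matrix.fromCols_toCols Z]
  rw [Matrix.fromCols_mul_fromBlocks, Matrix.transpose_fromCols,
    Matrix.fromCols_mul_fromRows]
  simp [mul_assoc]

/-- The nonnegative subrank is additive under direct sums. -/
theorem subrank_directSum {mX nX mY nY : ℕ}
    (X : Matrix (Fin mX) (Fin nX) ℝ) (Y : Matrix (Fin mY) (Fin nY) ℝ)
    (hX : EntrywiseNonneg X) (hY : EntrywiseNonneg Y) :
    subrank (Matrix.fromBlocks X 0 0 Y) = subrank X + subrank Y := by
  apply le_antisymm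
  · -- hard direction
    set q := subrank (Matrix.fromBlocks X 0 0 Y) with hq
    obtain ⟨W, Z, hW, hZ, hEq⟩ := subrank_mem (Matrix.fromBlocks X 0 0 Y)
    rw [mul_fromBlocks_split] at hEq
    set M : Matrix (Fin q) (Fin q) ℝ := W.toCols₁ * X * Z.toCols₁ᵀ with hM
    set N : Matrix (Fin q) (Fin q) ℝ := W.toCols₂ * Y * Z.toCols₂ᵀ with hN
    have hWl : EntrywiseNonneg W.toCols₁ := fun i j => hW i _
    have hWr : EntrywiseNonneg W.toCols₂ := fun i j => hW i _
    have hZl : EntrywiseNonneg Z.toCols₁ := fun i j => hZ i _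
    have hZr : EntrywiseNonneg Z.toCols₂ := fun i j => hZ i _
    have hMnn : EntrywiseNonneg M := ((hWl.matmul hX).matmul hZl.transpose)
    have hNnn : EntrywiseNonneg N := ((hWr.matmul hY).matmul hZr.transpose)
    have hsum : ∀ i j, M i j + N i j = (1 : Matrix (Fin q) (Fin q) ℝ) i j := by
      intro i j; rw [hEq]; simp [Matrix.add_apply]
    have hMdiag : ∀ i j, i ≠ j → M i j = 0 := by
      intro i j hij
      have h0 := hsum i j
      rw [Matrix.one_apply_ne hij] at h0
      linarith [hMnn i j, hNnn i j]
    have hNdiag : ∀ i j, i ≠ j → N i j = 0 := by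
      intro i j hij
      have h0 := hsum i j
      rw [Matrix.one_apply_ne hij] at h0
      linarith [hMnn i j, hNnn i j]
    have hKM := kle_of_diag hMdiag hWl hZl rfl hMnn
    have hKN := kle_of_diag hNdiag hWr hZr rfl hNnn
    have hcard : q ≤ (Finset.univ.filter fun i => M i i ≠ 0).card +
        (Finset.univ.filter fun i => N i i ≠ 0).card := by
      have hcover : (Finset.univ : Finset (Fin q)) ⊆
          (Finset.univ.filter fun i => M i i ≠ 0) ∪ (Finset.univ.filter fun i => N i i ≠ 0) := by
        intro i _
        rw [Finset.mem_union, Finset.mem_filter, Finset.mem_filter]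
        by_contra hc
        push_neg at hc
        have h1 : M i i = 0 := hc.1 (Finset.mem_univ i)
        have h2 : N i i = 0 := hc.2 (Finset.mem_univ i)
        have := hsum i i
        rw [h1, h2, Matrix.one_apply_eq] at this
        norm_num at this
      calc q = (Finset.univ : Finset (Fin q)).card := by simp
        _ ≤ _ := le_trans (Finset.card_le_card hcover) (Finset.card_union_le _ _)
    exact le_trans hcard (add_le_add (le_subrank hKM) (le_subrank hKN))
  · exact le_subrank (kle_directSum (subrank_mem X) (subrank_mem Y))
end

section
/- Let A, B, C be nonnegative matrices with A = BC (the usual matrix product). Then F(A) ≤ min(F(B), F(C)), where F is the fractional cover number. -/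
open Matrix Kronecker

/-- `R = X × Y` is a monochromatic rectangle of `A`: `X × Y ⊆ supp(A)`. -/
def IsMonoRect {m n : ℕ} (A : Matrix (Fin m) (Fin n) ℝ)
    (R : Finset (Fin m) × Finset (Fin n)) : Prop :=
  ∀ i ∈ R.1, ∀ j ∈ R.2, 0 < A i j

/-- The fractional cover number of `A`: the optimal value of the linear program assigning
weights `τ(R) ∈ [0,1]` to monochromatic rectangles so that every entry of the support is
fractionally covered with weight at least `1`, minimizing the total weight. -/
noncomputable def fracCover {m n : ℕ} (A : Matrix (Fin m) (Fin n) ℝ) : ℝ :=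
  sInf { v : ℝ | ∃ τ : Finset (Fin m) × Finset (Fin n) → ℝ,
    (∀ R, 0 ≤ τ R ∧ τ R ≤ 1) ∧
    (∀ R, ¬ IsMonoRect A R → τ R = 0) ∧
    (∀ i j, 0 < A i j →
      1 ≤ ∑ R : Finset (Fin m) × Finset (Fin n), (if i ∈ R.1 ∧ j ∈ R.2 then τ R else 0)) ∧
    v = ∑ R : Finset (Fin m) × Finset (Fin n), τ R }

/-- The feasible-value set of the fractional cover LP. -/
def fracSet {m n : ℕ} (A : Matrix (Fin m) (Fin n) ℝ) : Set ℝ :=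
  { v : ℝ | ∃ τ : Finset (Fin m) × Finset (Fin n) → ℝ,
    (∀ R, 0 ≤ τ R ∧ τ R ≤ 1) ∧
    (∀ R, ¬ IsMonoRect A R → τ R = 0) ∧
    (∀ i j, 0 < A i j →
      1 ≤ ∑ R : Finset (Fin m) × Finset (Fin n), (if i ∈ R.1 ∧ j ∈ R.2 then τ R else 0)) ∧
    v = ∑ R : Finset (Fin m) × Finset (Fin n), τ R }

lemma fracCover_eq {m n : ℕ} (A : Matrix (Fin m) (Fin n) ℝ) :
    fracCover A = sInf (fracSet A) := rfl

lemma fracSet_bddBelow {m n : ℕ} (A : Matrix (Fin m) (Fin n) ℝ) :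
    BddBelow (fracSet A) := by
  refine ⟨0, fun v hv => ?_⟩
  obtain ⟨τ, hτ01, -, -, hv⟩ := hv
  rw [hv]
  exact Finset.sum_nonneg fun R _ => (hτ01 R).1

open scoped Classical in
lemma fracSet_nonempty {m n : ℕ} (A : Matrix (Fin m) (Fin n) ℝ) :
    (fracSet A).Nonempty := by
  classical
  refine ⟨_, fun R => if IsMonoRect A R then 1 else 0, ?_, ?_, ?_, rfl⟩
  · intro R
    dsimp only
    refine ⟨?_, ?_⟩ <;> split <;> norm_num
  · intro R hR; simp [hR]
  · intro i j hij
    have hmono : IsMonoRect A ({i}, {j}) := by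
      intro a ha b hb
      simp only [Finset.mem_singleton] at ha hb
      subst ha; subst hb; exact hij
    have h1 : (1:ℝ) ≤ (if i ∈ (({i}, {j}) : Finset (Fin m) × Finset (Fin n)).1 ∧
        j ∈ (({i}, {j}) : Finset (Fin m) × Finset (Fin n)).2 then
        (if IsMonoRect A ({i}, {j}) then (1:ℝ) else 0) else 0) := by
      simp [hmono]
    refine le_trans h1 (Finset.single_le_sum
      (f := fun R : Finset (Fin m) × Finset (Fin n) =>
        if i ∈ R.1 ∧ j ∈ R.2 then (if IsMonoRect A R then (1:ℝ) else 0) else 0)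
      (fun R _ => ?_) (Finset.mem_univ _))
    split
    · split <;> norm_num
    · exact le_refl 0

/-- Transfer lemma: if each mono rectangle of `D` maps to a mono rectangle of `A`
and each positive entry of `A` has a positive witness entry in `D` whose rectangles
map to rectangles containing it, then `F(A) ≤ F(D)`. -/
lemma fracCover_le_of_map {m n p q : ℕ}
    (A : Matrix (Fin m) (Fin n) ℝ) (D : Matrix (Fin p) (Fin q) ℝ)
    (φ : Finset (Fin p) × Finset (Fin q) → Finset (Fin m) × Finset (Fin n))
    (hmono : ∀ R, IsMonoRect D R → IsMonoRect A (φ R))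
    (hwit : ∀ i j, 0 < A i j → ∃ a b, 0 < D a b ∧
      ∀ R : Finset (Fin p) × Finset (Fin q), a ∈ R.1 → b ∈ R.2 →
        i ∈ (φ R).1 ∧ j ∈ (φ R).2) :
    fracCover A ≤ fracCover D := by
  classical
  rw [fracCover_eq, fracCover_eq]
  refine le_csInf (fracSet_nonempty D) (fun v hv => ?_)
  obtain ⟨τ, hτ01, hτ0, hcov, hvsum⟩ := hv
  -- pushforward weight
  set s : Finset (Fin m) × Finset (Fin n) → ℝ :=
    fun R' => ∑ R : Finset (Fin p) × Finset (Fin q), (if φ R = R' then τ R else 0) with hs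
  have hs0 : ∀ R', 0 ≤ s R' := by
    intro R'
    refine Finset.sum_nonneg fun R _ => ?_
    split
    · exact (hτ01 R).1
    · exact le_refl 0
  set τ' : Finset (Fin m) × Finset (Fin n) → ℝ := fun R' => min 1 (s R') with hτ'
  have hkey : ∀ (P : Finset (Fin m) × Finset (Fin n) → Prop) [DecidablePred P],
      ∑ R' : Finset (Fin m) × Finset (Fin n), (if P R' then s R' else 0)
        = ∑ R : Finset (Fin p) × Finset (Fin q), (if P (φ R) then τ R else 0) := by
    intro P _
    have : ∀ R' : Finset (Fin m) × Finset (Fin n),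
        (if P R' then s R' else 0)
          = ∑ R : Finset (Fin p) × Finset (Fin q),
              (if φ R = R' then (if P R' then τ R else 0) else 0) := by
      intro R'
      split
      · rfl
      · simp
    rw [Finset.sum_congr rfl fun R' _ => this R', Finset.sum_comm]
    refine Finset.sum_congr rfl fun R _ => ?_
    rw [Finset.sum_ite_eq Finset.univ (φ R)
      (fun R' => if P R' then τ R else 0)]
    simp
  have hmem : (∑ R' : Finset (Fin m) × Finset (Fin n), τ' R') ∈ fracSet A := by
    refine ⟨τ', ?_, ?_, ?_, rfl⟩
    · intro R'
      exact ⟨le_min zero_le_one (hs0 R'), min_le_left _ _⟩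
    · intro R' hR'
      have : s R' = 0 := by
        refine Finset.sum_eq_zero fun R _ => ?_
        split
        · rename_i hφ
          by_cases hRm : IsMonoRect D R
          · exact absurd (hφ ▸ hmono R hRm) hR'
          · exact hτ0 R hRm
        · rfl
      simp [hτ', this]
    · intro i j hij
      obtain ⟨a, b, hab, hprop⟩ := hwit i j hij
      by_cases hcase : ∃ R' : Finset (Fin m) × Finset (Fin n),
          (i ∈ R'.1 ∧ j ∈ R'.2) ∧ 1 ≤ s R'
      · obtain ⟨R'0, hR'0, hs1⟩ := hcase
        have h1 : (1:ℝ) ≤ (if i ∈ R'0.1 ∧ j ∈ R'0.2 then τ' R'0 else 0) := by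
          rw [if_pos hR'0, hτ']
          simp only
          rw [min_eq_left hs1]
        refine le_trans h1 (Finset.single_le_sum
          (f := fun R' : Finset (Fin m) × Finset (Fin n) =>
            if i ∈ R'.1 ∧ j ∈ R'.2 then τ' R' else 0)
          (fun R' _ => ?_) (Finset.mem_univ _))
        split
        · exact le_min zero_le_one (hs0 R')
        · exact le_refl 0
      · push_neg at hcase
        have heq : ∀ R' : Finset (Fin m) × Finset (Fin n),
            (if i ∈ R'.1 ∧ j ∈ R'.2 then τ' R' else 0)
              = (if i ∈ R'.1 ∧ j ∈ R'.2 then s R' else 0) := by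
          intro R'
          by_cases h : i ∈ R'.1 ∧ j ∈ R'.2
          · rw [if_pos h, if_pos h, hτ']
            simp only
            exact min_eq_right (le_of_lt (hcase R' h))
          · rw [if_neg h, if_neg h]
        rw [Finset.sum_congr rfl fun R' _ => heq R']
        rw [hkey (fun R' => i ∈ R'.1 ∧ j ∈ R'.2)]
        refine le_trans (hcov a b hab) (Finset.sum_le_sum fun R _ => ?_)
        by_cases h : a ∈ R.1 ∧ b ∈ R.2
        · rw [if_pos h, if_pos (hprop R h.1 h.2)]
        · rw [if_neg h]
          split
          · exact (hτ01 R).1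
          · exact le_refl 0
  refine le_trans (csInf_le (fracSet_bddBelow A) hmem) ?_
  rw [hvsum]
  have : ∑ R' : Finset (Fin m) × Finset (Fin n), τ' R'
      ≤ ∑ R' : Finset (Fin m) × Finset (Fin n), s R' :=
    Finset.sum_le_sum fun R' _ => min_le_right _ _
  refine le_trans this ?_
  rw [hs, Finset.sum_comm]
  refine le_of_eq (Finset.sum_congr rfl fun R _ => ?_)
  rw [Finset.sum_ite_eq Finset.univ (φ R) (fun _ => τ R)]
  simp

/-- If `A = B * C` with nonnegative matrices, then `F(A) ≤ min (F(B), F(C))`. -/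
theorem fracCover_mul_le {m k n : ℕ}
    (A : Matrix (Fin m) (Fin n) ℝ) (B : Matrix (Fin m) (Fin k) ℝ)
    (C : Matrix (Fin k) (Fin n) ℝ)
    (hA : EntrywiseNonneg A) (hB : EntrywiseNonneg B) (hC : EntrywiseNonneg C)
    (hABC : A = B * C) :
    fracCover A ≤ min (fracCover B) (fracCover C) := by
  have hApos : ∀ i j, 0 < A i j → ∃ l, 0 < B i l ∧ 0 < C l j := by
    intro i j hij
    rw [hABC, Matrix.mul_apply] at hij
    by_contra h
    push_neg at h
    have : ∀ l ∈ Finset.univ, B i l * C l j = 0 := by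
      intro l _
      rcases le_or_gt (B i l) 0 with h1 | h1
      · rw [le_antisymm h1 (hB i l), zero_mul]
      · rw [le_antisymm (h l h1) (hC l j), mul_zero]
    rw [Finset.sum_eq_zero this] at hij
    exact lt_irrefl 0 hij
  have hentry : ∀ i j l, 0 < B i l → 0 < C l j → 0 < A i j := by
    intro i j l hb hc
    rw [hABC, Matrix.mul_apply]
    refine Finset.sum_pos' (fun l' _ => mul_nonneg (hB i l') (hC l' j)) ?_
    exact ⟨l, Finset.mem_univ l, mul_pos hb hc⟩
  classical
  refine le_min ?_ ?_
  · refine fracCover_le_of_map A B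
      (fun R => (R.1, Finset.univ.filter (fun j => ∃ l ∈ R.2, 0 < C l j))) ?_ ?_
    · intro R hR i hi j hj
      simp only [Finset.mem_filter] at hj
      obtain ⟨-, l, hl, hcl⟩ := hj
      exact hentry i j l (hR i hi l hl) hcl
    · intro i j hij
      obtain ⟨l, hb, hc⟩ := hApos i j hij
      exact ⟨i, l, hb, fun R ha hbm =>
        ⟨ha, Finset.mem_filter.mpr ⟨Finset.mem_univ j, l, hbm, hc⟩⟩⟩
  · refine fracCover_le_of_map A C
      (fun R => (Finset.univ.filter (fun i => ∃ l ∈ R.1, 0 < B i l), R.2)) ?_ ?_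
    · intro R hR i hi j hj
      simp only [Finset.mem_filter] at hi
      obtain ⟨-, l, hl, hbl⟩ := hi
      exact hentry i j l hbl (hR l hl j hj)
    · intro i j hij
      obtain ⟨l, hb, hc⟩ := hApos i j hij
      exact ⟨l, j, hc, fun R ha hbm =>
        ⟨Finset.mem_filter.mpr ⟨Finset.mem_univ i, l, ha, hb⟩, hbm⟩⟩
end

section
/- Let A be a nonnegative m × n matrix that is rectangular lower triangular (A_{i,j} = 0 for all i > j) with all diagonal entries A_{i,i} nonzero for i ≤ min(m,n). Then φ(A) = min(m,n) for every spectral point φ of the asymptotic spectrum of nonnegative matrices, i.e., for every assignment φ of a nonnegative real number to each nonnegative matrix such that: φ(X ⊗ Y) = φ(X)·φ(Y), φ(X ⊕ Y) = φ(X) + φ(Y), φ(I_k) = k for all k ∈ ℕ, and X ≤k Y implies φ(X) ≤ φ(Y). -/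
open Matrix Kronecker

open Filter

def pt (m : ℕ) : ℕ → Type
  | 0 => Fin 1
  | N+1 => Fin m × pt m N

instance ptFintype (m : ℕ) : ∀ N, Fintype (pt m N)
  | 0 => inferInstanceAs (Fintype (Fin 1))
  | N+1 => letI := ptFintype m N; inferInstanceAs (Fintype (Fin m × pt m N))

instance ptDecEq (m : ℕ) : ∀ N, DecidableEq (pt m N)
  | 0 => inferInstanceAs (DecidableEq (Fin 1))
  | N+1 => letI := ptDecEq m N; inferInstanceAs (DecidableEq (Fin m × pt m N))

lemma card_pt (m N : ℕ) : Fintype.card (pt m N) = m ^ N := by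
  induction N with
  | zero => simp [pt]; exact Fintype.card_fin 1
  | succ N ih =>
    show Fintype.card (Fin m × pt m N) = m ^ (N+1)
    rw [Fintype.card_prod, Fintype.card_fin, ih, pow_succ, mul_comm]

def ptCast {k m : ℕ} (h : k ≤ m) : ∀ {N}, pt k N → pt m N
  | 0, x => x
  | _+1, (i, u) => (Fin.castLE h i, ptCast h u)

def ptSum {k : ℕ} : ∀ {N}, pt k N → ℕ
  | 0, _ => 0
  | _+1, (i, u) => (i : ℕ) + ptSum u

def ptLE {m n : ℕ} : ∀ {N}, pt m N → pt n N → Prop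
  | 0, _, _ => True
  | _+1, (i,u), (j,v) => (i:ℕ) ≤ (j:ℕ) ∧ ptLE u v

noncomputable def tpow {m n : ℕ} (A : Matrix (Fin m) (Fin n) ℝ) : ∀ N, Matrix (pt m N) (pt n N) ℝ
  | 0 => (1 : Matrix (Fin 1) (Fin 1) ℝ)
  | N+1 => A ⊗ₖ tpow A N

lemma tpow_nonneg {m n : ℕ} {A : Matrix (Fin m) (Fin n) ℝ} (hA : EntrywiseNonneg A) :
    ∀ N, EntrywiseNonneg (tpow A N)
  | 0 => by
    show ∀ i j : Fin 1, (0:ℝ) ≤ (1 : Matrix (Fin 1) (Fin 1) ℝ) i j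
    intro i j
    rw [Matrix.one_apply]
    split <;> norm_num
  | N+1 => by
    rintro ⟨i, u⟩ ⟨j, v⟩
    show (0:ℝ) ≤ (A ⊗ₖ tpow A N) (i,u) (j,v)
    rw [Matrix.kroneckerMap_apply]
    exact mul_nonneg (hA i j) (tpow_nonneg hA N u v)

lemma tpow_support {m n : ℕ} {A : Matrix (Fin m) (Fin n) ℝ}
    (htri : ∀ (i : Fin m) (j : Fin n), (j : ℕ) < (i : ℕ) → A i j = 0) :
    ∀ N (u : pt m N) (v : pt n N), tpow A N u v ≠ 0 → ptLE u v
  | 0, u, v, _ => trivial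
  | N+1, (i,u), (j,v), h => by
    have h' : A i j * tpow A N u v ≠ 0 := h
    constructor
    · by_contra hc
      exact (mul_ne_zero_iff.1 h').1 (htri i j (by omega))
    · exact tpow_support htri N u v (mul_ne_zero_iff.1 h').2

lemma tpow_diag_pos {m n : ℕ} {A : Matrix (Fin m) (Fin n) ℝ} (hA : EntrywiseNonneg A)
    (hdiag : ∀ i : Fin (min m n),
      A (Fin.castLE (min_le_left m n) i) (Fin.castLE (min_le_right m n) i) ≠ 0) :
    ∀ N (w : pt (min m n) N),
      0 < tpow A N (ptCast (min_le_left m n) w) (ptCast (min_le_right m n) w)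
  | 0, w => by
    revert w
    show ∀ w : Fin 1, (0:ℝ) < (1 : Matrix (Fin 1) (Fin 1) ℝ) w w
    intro w
    rw [Matrix.one_apply_eq]; norm_num
  | N+1, (i,w) => by
    show (0:ℝ) < (A ⊗ₖ tpow A N) (Fin.castLE _ i, ptCast _ w) (Fin.castLE _ i, ptCast _ w)
    rw [Matrix.kroneckerMap_apply]
    exact mul_pos (lt_of_le_of_ne (hA _ _) (Ne.symm (hdiag i))) (tpow_diag_pos hA hdiag N w)

lemma ptSum_le {k : ℕ} : ∀ {N} (u : pt k N), ptSum u ≤ N * (k - 1)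
  | 0, _ => by show (0:ℕ) ≤ 0 * (k-1); omega
  | N+1, (i,u) => by
    have h1 : (i:ℕ) ≤ k - 1 := Nat.le_pred_of_lt i.isLt
    have h2 := ptSum_le u (N := N)
    show (i:ℕ) + ptSum u ≤ (N+1) * (k-1)
    nlinarith

lemma ptLE_cast_sum_le {k m n : ℕ} (hm : k ≤ m) (hn : k ≤ n) :
    ∀ {N} (u v : pt k N), ptLE (ptCast hm u) (ptCast hn v) → ptSum u ≤ ptSum v
  | 0, _, _, _ => le_refl _
  | N+1, (i,u), (j,v), h => by
    obtain ⟨h1, h2⟩ := h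
    have := ptLE_cast_sum_le hm hn u v h2
    show (i:ℕ) + ptSum u ≤ (j:ℕ) + ptSum v
    have h1' : (i:ℕ) ≤ (j:ℕ) := by simpa using h1
    omega

lemma ptLE_cast_eq {k m n : ℕ} (hm : k ≤ m) (hn : k ≤ n) :
    ∀ {N} (u v : pt k N), ptLE (ptCast hm u) (ptCast hn v) → ptSum u = ptSum v → u = v
  | 0, u, v, _, _ => Subsingleton.elim (α := Fin 1) u v
  | N+1, (i,u), (j,v), h, hs => by
    obtain ⟨h1, h2⟩ := h
    have h1' : (i:ℕ) ≤ (j:ℕ) := by simpa using h1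
    have hrec := ptLE_cast_sum_le hm hn u v h2
    have hs' : (i:ℕ) + ptSum u = (j:ℕ) + ptSum v := hs
    have hij : (i:ℕ) = (j:ℕ) := by omega
    have : u = v := ptLE_cast_eq hm hn u v h2 (by omega)
    exact Prod.ext (Fin.ext hij) this

lemma ident_KLE_tpow {m n : ℕ} {A : Matrix (Fin m) (Fin n) ℝ} (hA : EntrywiseNonneg A)
    (htri : ∀ (i : Fin m) (j : Fin n), (j : ℕ) < (i : ℕ) → A i j = 0)
    (hdiag : ∀ i : Fin (min m n),
      A (Fin.castLE (min_le_left m n) i) (Fin.castLE (min_le_right m n) i) ≠ 0)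
    (N s : ℕ) :
    KLE (1 : Matrix
      (Fin (Finset.univ.filter (fun v : pt (min m n) N => ptSum v = s)).card)
      (Fin (Finset.univ.filter (fun v : pt (min m n) N => ptSum v = s)).card) ℝ)
      (tpow A N) := by
  set S := Finset.univ.filter (fun v : pt (min m n) N => ptSum v = s) with hS
  set g : Fin S.card → pt (min m n) N := fun a => (S.equivFin.symm a).val with hg
  have hginj : Function.Injective g := fun a b h => by
    have := Subtype.ext h
    exact S.equivFin.symm.injective this
  have hgsum : ∀ a, ptSum (g a) = s := fun a => by
    have := (S.equivFin.symm a).2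
    exact (Finset.mem_filter.mp this).2
  set cm : Fin S.card → pt m N := fun a => ptCast (min_le_left m n) (g a) with hcm
  set cn : Fin S.card → pt n N := fun a => ptCast (min_le_right m n) (g a) with hcn
  set d : Fin S.card → ℝ := fun a => tpow A N (cm a) (cn a) with hd
  have hdpos : ∀ a, 0 < d a := fun a => tpow_diag_pos hA hdiag N (g a)
  set X : Matrix (Fin S.card) (pt m N) ℝ :=
    Matrix.of (fun a u => if u = cm a then (d a)⁻¹ else 0) with hX
  set Y : Matrix (Fin S.card) (pt n N) ℝ :=
    Matrix.of (fun b v => if v = cn b then 1 else 0) with hY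
  have hXapp : ∀ a u, X a u = if u = cm a then (d a)⁻¹ else 0 := fun a u => rfl
  have hYapp : ∀ b v, Y b v = if v = cn b then 1 else 0 := fun b v => rfl
  refine ⟨X, Y, ?_, ?_, ?_⟩
  · intro a u
    rw [hXapp]
    split
    · exact le_of_lt (inv_pos.2 (hdpos a))
    · exact le_refl _
  · intro b v
    rw [hYapp]
    split <;> norm_num
  · ext a b
    have step1 : ∀ v, (X * tpow A N) a v = (d a)⁻¹ * tpow A N (cm a) v := by
      intro v
      rw [Matrix.mul_apply]
      rw [Finset.sum_eq_single (cm a)]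
      · rw [hXapp, if_pos rfl]
      · intro u _ hu; rw [hXapp, if_neg hu, zero_mul]
      · intro h; exact absurd (Finset.mem_univ _) h
    rw [Matrix.mul_apply]
    rw [Finset.sum_eq_single (cn b)]
    · rw [step1, Matrix.transpose_apply, hYapp, if_pos rfl, mul_one]
      by_cases hab : a = b
      · subst hab
        rw [Matrix.one_apply_eq]
        exact (inv_mul_cancel₀ (ne_of_gt (hdpos a))).symm
      · rw [Matrix.one_apply_ne hab]
        have hz : tpow A N (cm a) (cn b) = 0 := by
          by_contra hne
          have hle := tpow_support htri N (cm a) (cn b) hne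
          have := ptLE_cast_eq (min_le_left m n) (min_le_right m n) (g a) (g b) hle
            (by rw [hgsum a, hgsum b])
          exact hab (hginj this)
        rw [hz, mul_zero]
    · intro v _ hv
      rw [Matrix.transpose_apply, hYapp, if_neg hv, mul_zero]
    · intro h; exact absurd (Finset.mem_univ _) h

/-- Every spectral point of the asymptotic spectrum of nonnegative matrices (a map `φ`
from nonnegative matrices of all sizes to nonnegative reals that is multiplicative under
Kronecker products, additive under direct sums, normalized on identities, and monotone
with respect to `≤k`) takes the value `min m n` on every rectangular lower triangular
nonnegative `m × n` matrix with nonzero diagonal entries. -/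
theorem spectral_point_triangular {m n : ℕ}
    (A : Matrix (Fin m) (Fin n) ℝ) (hA : EntrywiseNonneg A)
    (htri : ∀ (i : Fin m) (j : Fin n), (j : ℕ) < (i : ℕ) → A i j = 0)
    (hdiag : ∀ i : Fin (min m n),
      A (Fin.castLE (min_le_left m n) i) (Fin.castLE (min_le_right m n) i) ≠ 0)
    (φ : ∀ {α β : Type} [Fintype α] [Fintype β], Matrix α β ℝ → ℝ)
    (hmul : ∀ {α₁ β₁ α₂ β₂ : Type} [Fintype α₁] [Fintype β₁] [Fintype α₂] [Fintype β₂]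
      (X : Matrix α₁ β₁ ℝ) (Y : Matrix α₂ β₂ ℝ),
      EntrywiseNonneg X → EntrywiseNonneg Y → φ (X ⊗ₖ Y) = φ X * φ Y)
    (hadd : ∀ {α₁ β₁ α₂ β₂ : Type} [Fintype α₁] [Fintype β₁] [Fintype α₂] [Fintype β₂]
      (X : Matrix α₁ β₁ ℝ) (Y : Matrix α₂ β₂ ℝ),
      EntrywiseNonneg X → EntrywiseNonneg Y →
      φ (Matrix.fromBlocks X 0 0 Y) = φ X + φ Y)
    (hid : ∀ k : ℕ, φ (1 : Matrix (Fin k) (Fin k) ℝ) = k)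
    (hmono : ∀ {α₁ β₁ α₂ β₂ : Type} [Fintype α₁] [Fintype β₁] [Fintype α₂] [Fintype β₂]
      (X : Matrix α₁ β₁ ℝ) (Y : Matrix α₂ β₂ ℝ),
      EntrywiseNonneg X → EntrywiseNonneg Y → KLE X Y → φ X ≤ φ Y) :
    φ A = ((min m n : ℕ) : ℝ) := by
  set k := min m n with hk
  have hkm : k ≤ m := min_le_left m n
  have hkn : k ≤ n := min_le_right m n
  have hkchoice : k = m ∨ k = n := min_choice m n
  -- identity matrices are nonneg
  have hone_nonneg : ∀ p : ℕ, EntrywiseNonneg (1 : Matrix (Fin p) (Fin p) ℝ) := by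
    intro p i j
    rw [Matrix.one_apply]
    split <;> norm_num
  -- upper bound
  have hupper : φ A ≤ (k : ℝ) := by
    have hkle : KLE A (1 : Matrix (Fin k) (Fin k) ℝ) := by
      refine ⟨Matrix.of (fun i t => if (i:ℕ) = (t:ℕ) then 1 else 0),
        Matrix.of (fun j' t => A (Fin.castLE hkm t) j'), ?_, ?_, ?_⟩
      · intro i t; show (0:ℝ) ≤ if (i:ℕ) = (t:ℕ) then 1 else 0
        split <;> norm_num
      · intro j' t; exact hA _ _
      · ext i j'
        rw [Matrix.mul_one, Matrix.mul_apply]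
        by_cases hi : (i : ℕ) < k
        · rw [Finset.sum_eq_single (⟨(i:ℕ), hi⟩ : Fin k)]
          · show A i j' = (if (i:ℕ) = (i:ℕ) then (1:ℝ) else 0) * A (Fin.castLE hkm ⟨(i:ℕ), hi⟩) j'
            rw [if_pos rfl, one_mul]
            congr 1
          · intro t _ ht
            show (if (i:ℕ) = (t:ℕ) then (1:ℝ) else 0) * _ = 0
            rw [if_neg, zero_mul]
            intro hc
            exact ht (Fin.ext hc.symm)
          · intro h; exact absurd (Finset.mem_univ _) h
        · have hAiz : A i j' = 0 := by
            apply htri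
            have := i.isLt
            have := j'.isLt
            omega
          rw [hAiz]
          symm
          apply Finset.sum_eq_zero
          intro t _
          show (if (i:ℕ) = (t:ℕ) then (1:ℝ) else 0) * _ = 0
          rw [if_neg, zero_mul]
          have := t.isLt
          omega
    have := hmono A (1 : Matrix (Fin k) (Fin k) ℝ) hA (hone_nonneg k) hkle
    rwa [hid k] at this
  -- nonnegativity
  have hnn : 0 ≤ φ A := by
    have h0 : KLE (1 : Matrix (Fin 0) (Fin 0) ℝ) A := by
      refine ⟨0, 0, fun i j => le_refl _, fun i j => le_refl _, ?_⟩
      ext a b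
      exact a.elim0
    have := hmono (1 : Matrix (Fin 0) (Fin 0) ℝ) A (hone_nonneg 0) hA h0
    rw [hid 0] at this
    simpa using this
  -- phi of tensor powers
  have hphi_tpow : ∀ N, φ (tpow A N) = (φ A) ^ N := by
    intro N
    induction N with
    | zero =>
      show φ (1 : Matrix (Fin 1) (Fin 1) ℝ) = φ A ^ 0
      simpa using hid 1
    | succ N ih =>
      have : φ (tpow A (N+1)) = φ A * φ (tpow A N) :=
        hmul A (tpow A N) hA (tpow_nonneg hA N)
      rw [this, ih, pow_succ]
      ring
  -- key inequality
  have key : ∀ N : ℕ, ((k:ℝ)) ^ N ≤ ((N * (k-1) + 1 : ℕ) : ℝ) * (φ A) ^ N := by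
    intro N
    set B := N * (k-1) + 1 with hB
    -- pigeonhole
    have hcount : ∑ s ∈ Finset.range B,
        (Finset.univ.filter (fun v : pt k N => ptSum v = s)).card = k ^ N := by
      have H : ∀ v ∈ (Finset.univ : Finset (pt k N)), ptSum v ∈ Finset.range B := by
        intro v _
        rw [Finset.mem_range]
        have := ptSum_le v
        omega
      rw [← Finset.card_eq_sum_card_fiberwise H, Finset.card_univ, card_pt]
    have hexists : ∃ s ∈ Finset.range B,
        k ^ N ≤ B * (Finset.univ.filter (fun v : pt k N => ptSum v = s)).card := by
      apply Finset.exists_le_of_sum_le ⟨0, Finset.mem_range.2 (by omega)⟩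
      rw [Finset.sum_const, Finset.card_range, smul_eq_mul, ← Finset.mul_sum, hcount]
    obtain ⟨s, _, hsB⟩ := hexists
    set F := (Finset.univ.filter (fun v : pt k N => ptSum v = s)).card with hF
    have hFle : (F : ℝ) ≤ (φ A) ^ N := by
      have := hmono (1 : Matrix (Fin F) (Fin F) ℝ) (tpow A N) (hone_nonneg F)
        (tpow_nonneg hA N) (ident_KLE_tpow hA htri hdiag N s)
      rwa [hid F, hphi_tpow N] at this
    calc ((k:ℝ)) ^ N = ((k ^ N : ℕ) : ℝ) := by push_cast; ring
      _ ≤ ((B * F : ℕ) : ℝ) := by exact_mod_cast hsB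
      _ = (B : ℝ) * (F : ℝ) := by push_cast; ring
      _ ≤ (B : ℝ) * (φ A) ^ N := by
          apply mul_le_mul_of_nonneg_left hFle
          positivity
  -- conclude
  have hlower : (k : ℝ) ≤ φ A := by
    by_contra hlt
    push_neg at hlt
    have hkpos : (0:ℝ) < (k:ℝ) := lt_of_le_of_lt hnn hlt
    have hk1 : 1 ≤ k := by exact_mod_cast hkpos
    set r := φ A / (k:ℝ) with hr
    have hr0 : 0 ≤ r := div_nonneg hnn (le_of_lt hkpos)
    have hr1 : r < 1 := (div_lt_one hkpos).2 hlt
    have hkey' : ∀ N : ℕ, (1:ℝ) ≤ ((N * (k-1) + 1 : ℕ) : ℝ) * r ^ N := by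
      intro N
      have hkpow : (0:ℝ) < (k:ℝ) ^ N := pow_pos hkpos N
      have := key N
      rw [hr, div_pow, mul_div_assoc' ]
      rw [le_div_iff₀ hkpow, one_mul]
      exact this
    have h1 : Tendsto (fun N : ℕ => ((N:ℝ)) ^ 1 * r ^ N) atTop (nhds 0) :=
      (summable_pow_mul_geometric_of_norm_lt_one (R := ℝ) 1
        (by rwa [Real.norm_eq_abs, abs_of_nonneg hr0])).tendsto_atTop_zero
    have h2 : Tendsto (fun N : ℕ => r ^ N) atTop (nhds 0) :=
      tendsto_pow_atTop_nhds_zero_of_lt_one hr0 hr1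
    have hT : Tendsto (fun N : ℕ => ((N * (k-1) + 1 : ℕ) : ℝ) * r ^ N) atTop (nhds 0) := by
      have heq : (fun N : ℕ => ((N * (k-1) + 1 : ℕ) : ℝ) * r ^ N)
          = fun N : ℕ => ((k:ℝ) - 1) * ((N:ℝ) ^ 1 * r ^ N) + r ^ N := by
        funext N
        have : ((N * (k-1) + 1 : ℕ) : ℝ) = (N:ℝ) * ((k:ℝ) - 1) + 1 := by
          push_cast [Nat.cast_sub hk1]
          ring
        rw [this]
        ring
      rw [heq]
      have := (h1.const_mul ((k:ℝ) - 1)).add h2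
      simpa using this
    have hev : ∀ᶠ N in atTop, ((N * (k-1) + 1 : ℕ) : ℝ) * r ^ N < 1 :=
      hT.eventually_lt_const zero_lt_one
    obtain ⟨N, hN⟩ := hev.exists
    linarith [hkey' N]
  linarith
end
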